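/- arXiv:math/0411372 — 4 statements merged into one kernel-verified Lean document; each statement's English description precedes it below -/
import Mathlib

section
/- If a·m_0 + g_s + b·m_n = a'·m_0 + g_t + c·m_n with a, a' ∈ ℕ₀ and (s,b), (t,c) ∈ V∖W, then a = a', s = t, and b = c. -/
/-- For `t ≥ 1`, the quotient `q_t` in the division `t = q_t·p + r_t` with `r_t ∈ [1,p]`. -/
def qF (p t : ℕ) : ℕ := (t - 1) / p

/-- For `t ≥ 1`, the remainder `r_t ∈ [1,p]` in the division `t = q_t·p + r_t`. -/
def rF (p t : ℕ) : ℕ := (t - 1) % p + 1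

/-- `g_t = q_t·m_p + m_{r_t}` for `t ≥ 1`, and `g_0 = 0`. -/
def gF (p : ℕ) (m : ℕ → ℕ) (t : ℕ) : ℕ :=
  if t = 0 then 0 else qF p t * m p + m (rF p t)

/-- The set of non-negative integer combinations `Σ_{i=0}^{k} a_i·m_i`. -/
def gammaGen (k : ℕ) (m : ℕ → ℕ) : Set ℕ :=
  {x | ∃ a : ℕ → ℕ, x = ∑ i ∈ Finset.range (k + 1), a i * m i}

/-!
Since `g_t = ⌈t/p⌉·m₀ + t·c`, the defect `g_σ + g_τ - g_{σ+τ}` is a multiple of `m₀`, so every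
relation between representations can be read modulo `m₀`. The one fact needed is that
`e·m_n ≢ g_σ (mod m₀)` for `σ < u` and `0 < e < υ`: otherwise `g_σ - m₀ ∈ Γ` or `e·m_n ∈ Γ'`.
Given two representations with `c ≤ b`, put `d = b - c`. For `d = 0`, `g_s ≡ g_t` forces `s = t`.
For `d > 0` and `s ≤ t` one gets `d·m_n ≡ g_{t-s}`. For `d > 0` and `t < s` one gets
`g_{s-t} + d·m_n ≡ 0`; adding `(υ - d)·m_n`, resp. `g_{u-(s-t)}`, and using
`υ·m_n = μ·m₀ + g_z`, resp. `g_u = λ·m₀ + w·m_n`, shows `u - z ≤ s - t` and `υ - w ≤ d`,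
that is, `(s, b) ∈ W`.
-/

theorem Nat.exists_eq_add_mul_of_modEq {M x y : ℕ} (h : x ≡ y [MOD M]) (hxy : x ≤ y) :
    ∃ j, y = x + j * M := by
  obtain ⟨j, hj⟩ := (Nat.modEq_iff_dvd' hxy).mp h
  exact ⟨j, by rw [mul_comm, ← hj]; omega⟩

theorem Nat.modEq_of_mul_add_eq {M k l x y : ℕ} (h : k * M + x = l * M + y) : x ≡ y [MOD M] := by
  have h' := congrArg (· % M) h
  simpa only [Nat.ModEq, mul_comm _ M, Nat.mul_add_mod] using h'

theorem Nat.ceilDiv_add_le {p : ℕ} (hp : 0 < p) (a b : ℕ) : (a + b) ⌈/⌉ p ≤ a ⌈/⌉ p + b ⌈/⌉ p := by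
  rw [ceilDiv_le_iff_le_mul hp, mul_add]
  exact add_le_add (le_smul_ceilDiv hp) (le_smul_ceilDiv hp)

section NumericalSemigroup

variable {p : ℕ} {m : ℕ → ℕ}

theorem add_mem_gammaGen {k x y : ℕ} (hx : x ∈ gammaGen k m) (hy : y ∈ gammaGen k m) :
    x + y ∈ gammaGen k m := by
  obtain ⟨A, rfl⟩ := hx
  obtain ⟨B, rfl⟩ := hy
  exact ⟨A + B, by simp only [Pi.add_apply, add_mul, Finset.sum_add_distrib]⟩

theorem mul_mem_gammaGen {k i : ℕ} (j : ℕ) (hi : i ≤ k) : j * m i ∈ gammaGen k m := by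
  refine ⟨Pi.single i j, ?_⟩
  rw [Finset.sum_eq_single_of_mem i (Finset.mem_range.mpr (Nat.lt_succ_of_le hi))
    (fun l _ hl => by rw [Pi.single_eq_of_ne hl, zero_mul]), Pi.single_eq_same]

theorem gammaGen_mono {k k' : ℕ} (h : k ≤ k') : gammaGen k m ⊆ gammaGen k' m := by
  rintro _ ⟨A, rfl⟩
  refine ⟨fun i => if i ≤ k then A i else 0, ?_⟩
  rw [← Finset.sum_subset (Finset.range_subset_range.mpr (Nat.succ_le_succ h))
    (fun i _ hi => by simp [Nat.lt_succ_iff.not.mp (Finset.mem_range.not.mp hi)])]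
  exact Finset.sum_congr rfl fun i hi => by simp [Nat.lt_succ_iff.mp (Finset.mem_range.mp hi)]

theorem mul_add_gF_mem_gammaGen (hp : 0 < p) (j t : ℕ) :
    j * m 0 + gF p m t ∈ gammaGen p m := by
  refine add_mem_gammaGen (mul_mem_gammaGen j p.zero_le) ?_
  unfold gF rF
  split_ifs
  · simpa using mul_mem_gammaGen (m := m) 0 p.zero_le
  · refine add_mem_gammaGen (mul_mem_gammaGen _ le_rfl) ?_
    simpa using mul_mem_gammaGen (m := m) 1 (Nat.mod_lt (t - 1) hp : (t - 1) % p < p)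

theorem gF_eq (hp : 0 < p) {c : ℕ} (harith : ∀ i ≤ p, m i = m 0 + i * c) (t : ℕ) :
    gF p m t = t ⌈/⌉ p * m 0 + t * c := by
  rcases t with _ | k
  · simp [gF]
  · have hq : (k + 1) ⌈/⌉ p = k / p + 1 := by
      rw [Nat.ceilDiv_eq_add_pred_div, show k + 1 + p - 1 = k + p by omega, Nat.add_div_right k hp]
    have hdiv : p * (k / p) + k % p = k := Nat.div_add_mod k p
    simp only [gF, qF, rF, Nat.add_sub_cancel, if_neg k.succ_ne_zero, hq,
      harith p le_rfl, harith (k % p + 1) (Nat.mod_lt k hp)]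
    have hdiv' : (p * (k / p) + k % p) * c = k * c := by rw [hdiv]
    linarith

theorem strictMono_gF (hp : 0 < p) {c : ℕ} (hc : 0 < c) (harith : ∀ i ≤ p, m i = m 0 + i * c) :
    StrictMono (gF p m) := by
  intro s t hst
  rw [gF_eq hp harith, gF_eq hp harith]
  have hq : s ⌈/⌉ p * m 0 ≤ t ⌈/⌉ p * m 0 :=
    Nat.mul_le_mul_right _ ((gc_mul_ceilDiv hp).monotone_l hst.le)
  have hc : s * c < t * c := Nat.mul_lt_mul_of_pos_right hst hc
  omega

theorem exists_gF_add_gF_eq (hp : 0 < p) {c : ℕ} (harith : ∀ i ≤ p, m i = m 0 + i * c) (σ τ : ℕ) :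
    ∃ ε, gF p m σ + gF p m τ = gF p m (σ + τ) + ε * m 0 := by
  obtain ⟨ε, hε⟩ := Nat.exists_eq_add_of_le (Nat.ceilDiv_add_le hp σ τ)
  refine ⟨ε, ?_⟩
  have hε' : (σ ⌈/⌉ p + τ ⌈/⌉ p) * m 0 = ((σ + τ) ⌈/⌉ p + ε) * m 0 := by rw [hε]
  simp only [gF_eq hp harith]
  linarith

theorem gF_ne_of_isLeast (hp : 0 < p) {n u : ℕ} (hpn : p ≤ n)
    (hu : IsLeast {t | gF p m t ∉ {γ | γ ∈ gammaGen n m ∧ ∀ δ ∈ gammaGen n m, δ + m 0 ≠ γ}} u)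
    {τ : ℕ} (hτ : τ < u) (j σ e : ℕ) : gF p m τ ≠ (j + 1) * m 0 + gF p m σ + e * m n := by
  intro h
  have hmem : gF p m τ ∈ {γ | γ ∈ gammaGen n m ∧ ∀ δ ∈ gammaGen n m, δ + m 0 ≠ γ} :=
    by_contra fun h' => absurd (hu.2 h') (not_le.mpr hτ)
  refine hmem.2 (j * m 0 + gF p m σ + e * m n)
    (add_mem_gammaGen (gammaGen_mono hpn (mul_add_gF_mem_gammaGen hp j σ))
      (mul_mem_gammaGen e le_rfl)) ?_
  rw [h]
  ring

theorem mul_ne_of_isLeast (hp : 0 < p) {E v : ℕ}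
    (hv : IsLeast {b | 1 ≤ b ∧ b * E ∈ gammaGen p m} v) {e : ℕ} (he : 0 < e) (hev : e < v)
    (j σ : ℕ) : e * E ≠ j * m 0 + gF p m σ :=
  fun h => absurd (hv.2 ⟨he, h ▸ mul_add_gF_mem_gammaGen hp j σ⟩) (not_le.mpr hev)

end NumericalSemigroup

/-- The properties of `g_t` that the uniqueness argument uses: with `Γ` containing every
`j·M + g_σ + e·E`, the values `g_τ` with `τ < u` lie in the Apéry set `{γ | γ - M ∉ Γ}`, and
`e·E` is not of the form `j·M + g_σ` for `0 < e < v`. -/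
structure AperyData (g : ℕ → ℕ) (M E u v : ℕ) : Prop where
  map_zero : g 0 = 0
  add_eq : ∀ σ τ, ∃ ε, g σ + g τ = g (σ + τ) + ε * M
  ne_shift : ∀ τ < u, ∀ j σ e, g τ ≠ (j + 1) * M + g σ + e * E
  mul_ne : ∀ e, 0 < e → e < v → ∀ j σ, e * E ≠ j * M + g σ

namespace AperyData

variable {g : ℕ → ℕ} {M E u v : ℕ}

theorem not_mul_modEq (hA : AperyData g M E u v) {σ e : ℕ} (hσ : σ < u) (he : 0 < e)
    (hev : e < v) : ¬ e * E ≡ g σ [MOD M] := by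
  intro h
  rcases le_total (e * E) (g σ) with hle | hle
  · obtain ⟨_ | j, hj⟩ := Nat.exists_eq_add_mul_of_modEq h hle
    · exact hA.mul_ne e he hev 0 σ (by omega)
    · exact hA.ne_shift σ hσ j 0 e (by rw [hj, hA.map_zero]; ring)
  · obtain ⟨j, hj⟩ := Nat.exists_eq_add_mul_of_modEq h.symm hle
    exact hA.mul_ne e he hev j σ (by omega)

theorem eq_of_modEq (hA : AperyData g M E u v) (hg : Function.Injective g) {s t : ℕ}
    (hs : s < u) (ht : t < u) (h : g s ≡ g t [MOD M]) : s = t := by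
  wlog hle : g s ≤ g t generalizing s t
  · exact (this ht hs h.symm (le_of_not_ge hle)).symm
  obtain ⟨_ | j, hj⟩ := Nat.exists_eq_add_mul_of_modEq h hle
  · exact hg (by simpa using hj.symm)
  · exact (hA.ne_shift t ht j s 0 (by rw [hj]; ring)).elim

theorem mul_add_add_ne_of_le (hA : AperyData g M E u v) {a a' s t d : ℕ} (hst : s ≤ t)
    (ht : t < u) (hd : 0 < d) (hdv : d < v) : a * M + g s + d * E ≠ a' * M + g t := by
  intro h
  obtain ⟨σ, rfl⟩ := Nat.exists_eq_add_of_le hst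
  obtain ⟨ε, hε⟩ := hA.add_eq s σ
  exact hA.not_mul_modEq (show σ < u by omega) hd hdv
    (Nat.modEq_of_mul_add_eq (k := a + ε) (l := a') (by linarith))

theorem sub_le_and_sub_le_of_add_mul_eq_mul (hA : AperyData g M E u v) {lam w mu z : ℕ}
    (hgu : g u = lam * M + w * E) (hvE : v * E = mu * M + g z) {σ d k : ℕ} (hσ : 0 < σ)
    (hσu : σ < u) (hd : 0 < d) (hdv : d < v) (hk : g σ + d * E = M * k) :
    u - z ≤ σ ∧ v - w ≤ d := by
  constructor
  · by_contra! h
    obtain ⟨ε, hε⟩ := hA.add_eq σ z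
    have hvd : (v - d) * E + d * E = v * E := by rw [← add_mul, Nat.sub_add_cancel hdv.le]
    exact hA.not_mul_modEq (show σ + z < u by omega) (show 0 < v - d by omega)
      (show v - d < v by omega) (Nat.modEq_of_mul_add_eq (k := k) (l := mu + ε) (by linarith))
  · by_contra! h
    obtain ⟨ε, hε⟩ := hA.add_eq σ (u - σ)
    rw [Nat.add_sub_cancel' hσu.le, hgu] at hε
    exact hA.not_mul_modEq (show u - σ < u by omega) (show 0 < d + w by omega)
      (show d + w < v by omega) (Nat.modEq_of_mul_add_eq (k := lam + ε) (l := k) (by linarith))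

theorem eq_of_mul_add_add_eq_of_le (hA : AperyData g M E u v) (hM : 0 < M)
    (hg : Function.Injective g) {lam w mu z : ℕ} (hgu : g u = lam * M + w * E)
    (hvE : v * E = mu * M + g z) {a a' s t b c : ℕ} (hs : s < u) (ht : t < u) (hb : b < v)
    (hsW : ¬ (u - z ≤ s ∧ v - w ≤ b)) (hcb : c ≤ b)
    (heq : a * M + g s + b * E = a' * M + g t + c * E) : a = a' ∧ s = t ∧ b = c := by
  obtain ⟨d, rfl⟩ := Nat.exists_eq_add_of_le hcb
  have h : a * M + g s + d * E = a' * M + g t := by linarith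
  rcases Nat.eq_zero_or_pos d with rfl | hd
  · obtain rfl : s = t :=
      hA.eq_of_modEq hg hs ht (Nat.modEq_of_mul_add_eq (k := a) (l := a') (by simpa using h))
    exact ⟨Nat.eq_of_mul_eq_mul_right hM (by simpa using h), rfl, rfl⟩
  exfalso
  rcases le_or_gt s t with hst | hts
  · exact hA.mul_add_add_ne_of_le hst ht hd (by omega) h
  obtain ⟨σ, rfl⟩ := Nat.exists_eq_add_of_lt hts
  obtain ⟨ε, hε⟩ := hA.add_eq t (σ + 1)
  rw [← add_assoc] at hε
  obtain ⟨k, hk⟩ : M ∣ g (σ + 1) + d * E :=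
    (Nat.dvd_add_right (dvd_mul_left M a)).mp ⟨a' + ε, by linarith⟩
  have hW := hA.sub_le_and_sub_le_of_add_mul_eq_mul hgu hvE σ.succ_pos (by omega) hd
    (by omega) hk
  exact hsW ⟨by omega, by omega⟩

theorem eq_of_mul_add_add_eq (hA : AperyData g M E u v) (hM : 0 < M)
    (hg : Function.Injective g) {lam w mu z : ℕ} (hgu : g u = lam * M + w * E)
    (hvE : v * E = mu * M + g z) {a a' s t b c : ℕ} (hs : s < u) (ht : t < u) (hb : b < v)
    (hc : c < v) (hsW : ¬ (u - z ≤ s ∧ v - w ≤ b)) (htW : ¬ (u - z ≤ t ∧ v - w ≤ c))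
    (heq : a * M + g s + b * E = a' * M + g t + c * E) : a = a' ∧ s = t ∧ b = c := by
  rcases le_total c b with hcb | hbc
  · exact hA.eq_of_mul_add_add_eq_of_le hM hg hgu hvE hs ht hb hsW hcb heq
  · obtain ⟨h₁, h₂, h₃⟩ := hA.eq_of_mul_add_add_eq_of_le hM hg hgu hvE ht hs hc htW hbc heq.symm
    exact ⟨h₁.symm, h₂.symm, h₃.symm⟩

end AperyData

theorem stmt3_general
    (p n : ℕ) (hp : 1 ≤ p) (hn : n = p + 1)
    (m : ℕ → ℕ) (c : ℕ) (hc : 1 ≤ c) (hm0 : 0 < m 0)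
    (harith : ∀ i ≤ p, m i = m 0 + i * c)
    (S : Set ℕ)
    (hS : S = {γ | γ ∈ gammaGen n m ∧ ∀ δ ∈ gammaGen n m, δ + m 0 ≠ γ})
    (u : ℕ) (hu : IsLeast {t : ℕ | gF p m t ∉ S} u)
    (v : ℕ) (hv : IsLeast {b : ℕ | 1 ≤ b ∧ b * m n ∈ gammaGen p m} v)
    (lam w mu z : ℕ)
    (hgu : gF p m u = lam * m 0 + w * m n)
    (hvmn : v * m n = mu * m 0 + gF p m z)
    (V W : Set (ℕ × ℕ))
    (hV : V = {sb | sb.1 < u ∧ sb.2 < v})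
    (hW : W = {sb | u - z ≤ sb.1 ∧ sb.1 < u ∧ v - w ≤ sb.2 ∧ sb.2 < v})
    (a a' s t b c' : ℕ)
    (hsb : (s, b) ∈ V \ W) (htc : (t, c') ∈ V \ W)
    (heq : a * m 0 + gF p m s + b * m n = a' * m 0 + gF p m t + c' * m n) :
    a = a' ∧ s = t ∧ b = c' := by
  subst hS hV hW
  obtain ⟨⟨hs, hb⟩, hsW⟩ := hsb
  obtain ⟨⟨ht, hc'⟩, htW⟩ := htc
  have hA : AperyData (gF p m) (m 0) (m n) u v :=
    ⟨by simp [gF], exists_gF_add_gF_eq hp harith, fun _ hτ => gF_ne_of_isLeast hp (by omega) hu hτ,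
      fun _ he hev => mul_ne_of_isLeast hp hv he hev⟩
  exact hA.eq_of_mul_add_add_eq hm0 (strictMono_gF hp hc harith).injective hgu hvmn hs ht hb hc'
    (fun h => hsW ⟨h.1, hs, h.2, hb⟩) (fun h => htW ⟨h.1, ht, h.2, hc'⟩) heq

/-- Uniqueness of the representation `a·m_0 + g_s + b·m_n` with `(s,b) ∈ V∖W`. -/
theorem stmt3
    (p n : ℕ) (hp : 1 ≤ p) (hn : n = p + 1)
    (m : ℕ → ℕ) (c : ℕ) (hc : 1 ≤ c) (hm0 : 0 < m 0)
    (harith : ∀ i ≤ p, m i = m 0 + i * c) (hmn : 0 < m n)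
    (hgcd : Finset.gcd (Finset.range (n + 1)) m = 1)
    (hminimal : ∀ j ≤ n, ¬ ∃ a : ℕ → ℕ, a j = 0 ∧
        m j = ∑ i ∈ Finset.range (n + 1), a i * m i)
    (S : Set ℕ)
    (hS : S = {γ | γ ∈ gammaGen n m ∧ ∀ δ ∈ gammaGen n m, δ + m 0 ≠ γ})
    (u : ℕ) (hu : IsLeast {t : ℕ | gF p m t ∉ S} u)
    (v : ℕ) (hv : IsLeast {b : ℕ | 1 ≤ b ∧ b * m n ∈ gammaGen p m} v)
    (lam w mu z : ℕ) (hlam : 1 ≤ lam) (hw : w < v) (hz : z < u)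
    (hgu : gF p m u = lam * m 0 + w * m n)
    (hvmn : v * m n = mu * m 0 + gF p m z)
    (V W : Set (ℕ × ℕ))
    (hV : V = {sb | sb.1 < u ∧ sb.2 < v})
    (hW : W = {sb | u - z ≤ sb.1 ∧ sb.1 < u ∧ v - w ≤ sb.2 ∧ sb.2 < v})
    (a a' s t b c' : ℕ)
    (hsb : (s, b) ∈ V \ W) (htc : (t, c') ∈ V \ W)
    (heq : a * m 0 + gF p m s + b * m n = a' * m 0 + gF p m t + c' * m n) :
    a = a' ∧ s = t ∧ b = c' :=
  stmt3_general p n hp hn m c hc hm0 harith S hS u hu v hv lam w mu z hgu hvmn V W hV hW a a' s t b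
    c' hsb htc heq
end

section
/- Assume z ≥ 1 and w ≥ 1 (i.e., W ≠ ∅). Let h_1 ≥ 0, s_1 ∈ [1,p], l_1 > q', and d_1 ≥ υ−w be integers. Then there exist integers h ≥ h_1, s ∈ [1,p], l ≤ q, and d < υ such that h_1·m_0 + m_{s_1} + l_1·m_p + d_1·m_n = h·m_0 + m_s + l·m_p + d·m_n, and moreover either l ≤ q' or d < υ−w. -/
lemma qF_mul_add_rF (p t : ℕ) (ht : 1 ≤ t) : qF p t * p + rF p t = t := by
  have := Nat.div_add_mod (t - 1) p
  unfold qF rF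
  rw [Nat.mul_comm]
  omega

lemma one_le_rF (p t : ℕ) : 1 ≤ rF p t :=
  Nat.le_add_left 1 _

lemma rF_le (p t : ℕ) (hp : 1 ≤ p) : rF p t ≤ p := by
  have := Nat.mod_lt (t - 1) hp
  unfold rF
  omega

lemma qF_le_iff (p t k : ℕ) (hp : 1 ≤ p) (ht : 1 ≤ t) : qF p t ≤ k ↔ t ≤ k * p + p := by
  unfold qF
  rw [← Nat.lt_add_one_iff, Nat.div_lt_iff_lt_mul hp, Nat.add_mul, one_mul]
  omega

lemma qF_rF_mul_add (p l s : ℕ) (hs : 1 ≤ s) (hsp : s ≤ p) :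
    qF p (l * p + s) = l ∧ rF p (l * p + s) = s := by
  have e : l * p + s - 1 = (s - 1) + p * l := by rw [Nat.mul_comm]; omega
  unfold qF rF
  rw [e, Nat.add_mul_div_left _ _ (by omega), Nat.add_mul_mod_self_left,
    Nat.div_eq_of_lt (by omega), Nat.mod_eq_of_lt (by omega)]
  omega

lemma gF_of_pos (p : ℕ) (m : ℕ → ℕ) (t : ℕ) (ht : 1 ≤ t) :
    gF p m t = qF p t * m p + m (rF p t) :=
  if_neg (by omega)

lemma gF_mul_add (p : ℕ) (m : ℕ → ℕ) (l s : ℕ) (hs : 1 ≤ s) (hsp : s ≤ p) :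
    gF p m (l * p + s) = l * m p + m s := by
  obtain ⟨hq, hr⟩ := qF_rF_mul_add p l s hs hsp
  rw [gF_of_pos p m _ (by omega), hq, hr]

lemma exists_gF_add_gF (p : ℕ) (hp : 1 ≤ p) (m : ℕ → ℕ) (c : ℕ)
    (harith : ∀ i ≤ p, m i = m 0 + i * c) (a b : ℕ) :
    ∃ ε ≤ 1, gF p m a + gF p m b = ε * m 0 + gF p m (a + b) := by
  rcases Nat.eq_zero_or_pos a with rfl | ha
  · exact ⟨0, zero_le_one, by simp [gF]⟩
  rcases Nat.eq_zero_or_pos b with rfl | hb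
  · exact ⟨0, zero_le_one, by simp [gF]⟩
  obtain ⟨la, sa, hsa, hsap, rfl⟩ : ∃ l s, 1 ≤ s ∧ s ≤ p ∧ l * p + s = a :=
    ⟨qF p a, rF p a, one_le_rF p _, rF_le p a hp, qF_mul_add_rF p a ha⟩
  obtain ⟨lb, sb, hsb, hsbp, rfl⟩ : ∃ l s, 1 ≤ s ∧ s ≤ p ∧ l * p + s = b :=
    ⟨qF p b, rF p b, one_le_rF p _, rF_le p b hp, qF_mul_add_rF p b hb⟩
  rw [gF_mul_add p m la sa hsa hsap, gF_mul_add p m lb sb hsb hsbp]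
  by_cases hs : sa + sb ≤ p
  · refine ⟨1, le_rfl, ?_⟩
    rw [show la * p + sa + (lb * p + sb) = (la + lb) * p + (sa + sb) by ring,
      gF_mul_add p m _ _ (by omega) hs, harith sa hsap, harith sb hsbp, harith _ hs]
    ring
  · refine ⟨0, zero_le_one, ?_⟩
    obtain ⟨j, hj⟩ : ∃ j, sa + sb = p + j := ⟨sa + sb - p, by omega⟩
    rw [show la * p + sa + (lb * p + sb) = (la + lb + 1) * p + j by linear_combination hj,
      gF_mul_add p m _ j (by omega) (by omega), harith sa hsap, harith sb hsbp,
      harith p le_rfl, harith j (by omega)]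
    linear_combination c * hj

section Rewriting

variable {p : ℕ} {m : ℕ → ℕ} {c e u z v w lam mu : ℕ}

lemma exists_gF_add_eq (hp : 1 ≤ p) (harith : ∀ i ≤ p, m i = m 0 + i * c) (hlam : 1 ≤ lam)
    (hgu : gF p m u = lam * m 0 + w * e) (t : ℕ) :
    ∃ k, gF p m (t + u) = k * m 0 + gF p m t + w * e := by
  obtain ⟨ε, hε, heq⟩ := exists_gF_add_gF p hp m c harith t u
  refine ⟨lam - ε, ?_⟩
  zify [hε.trans hlam] at heq hgu ⊢
  linear_combination hgu - heq

lemma exists_add_mul_eq_gF_add (hp : 1 ≤ p) (harith : ∀ i ≤ p, m i = m 0 + i * c)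
    (hvmn : v * e = mu * m 0 + gF p m z) (t : ℕ) :
    ∃ k, gF p m t + v * e = k * m 0 + gF p m (t + z) := by
  obtain ⟨ε, -, heq⟩ := exists_gF_add_gF p hp m c harith t z
  exact ⟨mu + ε, by linear_combination hvmn + heq⟩

lemma exists_gF_add_sub_add_mul_sub_eq (hp : 1 ≤ p) (harith : ∀ i ≤ p, m i = m 0 + i * c)
    (hlam : 1 ≤ lam) (hzu : z ≤ u) (hwv : w ≤ v)
    (hgu : gF p m u = lam * m 0 + w * e) (hvmn : v * e = mu * m 0 + gF p m z) (t : ℕ) :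
    ∃ k, gF p m (t + (u - z)) + (v - w) * e = k * m 0 + gF p m t := by
  obtain ⟨ε₁, hε₁, heq₁⟩ := exists_gF_add_gF p hp m c harith t (u - z)
  obtain ⟨ε₂, -, heq₂⟩ := exists_gF_add_gF p hp m c harith z (u - z)
  rw [Nat.add_sub_cancel' hzu] at heq₂
  refine ⟨lam + mu + ε₂ - ε₁, ?_⟩
  zify [hzu, hwv, show ε₁ ≤ lam + mu + ε₂ by omega] at heq₁ heq₂ hgu hvmn ⊢
  linear_combination heq₂ + hvmn - heq₁ + hgu

theorem exists_reduced_gF_add_mul (hp : 1 ≤ p) (harith : ∀ i ≤ p, m i = m 0 + i * c) (hlam : 1 ≤ lam)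
    (hzu : z < u) (hwv : w < v)
    (hgu : gF p m u = lam * m 0 + w * e) (hvmn : v * e = mu * m 0 + gF p m z)
    {T T' : ℕ} (huT : u ≤ T) (huzT' : u - z ≤ T') (t d : ℕ) (ht : 1 ≤ t) :
    ∃ k t' d', 1 ≤ t' ∧ t' ≤ T ∧ d' < v ∧ (t' ≤ T' ∨ d' < v - w) ∧
      gF p m t + d * e = k * m 0 + gF p m t' + d' * e := by
  have hzw : z * w < u * v := Nat.mul_lt_mul'' hzu hwv
  -- `(u + z)/(v + w)` lies strictly between `z/v` and `u/w`, so every move decreases this weight.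
  obtain ⟨N, hN⟩ : ∃ N, (v + w) * t + (u + z) * d < N := ⟨_, lt_add_one _⟩
  induction N generalizing t d with
  | zero => omega
  | succ N IH =>
    by_cases hdone : t ≤ T ∧ d < v ∧ (t ≤ T' ∨ d < v - w)
    · exact ⟨0, t, d, ht, hdone.1, hdone.2.1, hdone.2.2, by ring⟩
    by_cases hT : T < t
    · obtain ⟨t₀, rfl⟩ : ∃ t₀, t = t₀ + u := ⟨t - u, by omega⟩
      obtain ⟨k₁, hk₁⟩ := exists_gF_add_eq hp harith hlam hgu t₀
      obtain ⟨k₂, t', d', ht', htT, hdv, hor, heq⟩ := IH t₀ (d + w) (by omega) (by nlinarith)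
      exact ⟨k₁ + k₂, t', d', ht', htT, hdv, hor, by linear_combination hk₁ + heq⟩
    by_cases hv : v ≤ d
    · obtain ⟨d₀, rfl⟩ : ∃ d₀, d = d₀ + v := ⟨d - v, by omega⟩
      obtain ⟨k₁, hk₁⟩ := exists_add_mul_eq_gF_add hp harith hvmn t
      obtain ⟨k₂, t', d', ht', htT, hdv, hor, heq⟩ := IH (t + z) d₀ (by omega) (by nlinarith)
      exact ⟨k₁ + k₂, t', d', ht', htT, hdv, hor, by linear_combination hk₁ + heq⟩
    · have hpos : 0 < (v + w) * (u - z) := Nat.mul_pos (by omega) (by omega)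
      obtain ⟨t₀, rfl⟩ : ∃ t₀, t = t₀ + (u - z) := ⟨t - (u - z), by omega⟩
      obtain ⟨d₀, rfl⟩ : ∃ d₀, d = d₀ + (v - w) := ⟨d - (v - w), by omega⟩
      obtain ⟨k₁, hk₁⟩ :=
        exists_gF_add_sub_add_mul_sub_eq hp harith hlam hzu.le hwv.le hgu hvmn t₀
      obtain ⟨k₂, t', d', ht', htT, hdv, hor, heq⟩ := IH t₀ d₀ (by omega) (by nlinarith)
      exact ⟨k₁ + k₂, t', d', ht', htT, hdv, hor, by linear_combination hk₁ + heq⟩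

end Rewriting

theorem stmt6_general
    (p n : ℕ) (hp : 1 ≤ p)
    (m : ℕ → ℕ) (c : ℕ)
    (harith : ∀ i ≤ p, m i = m 0 + i * c)
    (u : ℕ) (v : ℕ)
    (lam w mu z : ℕ) (hlam : 1 ≤ lam) (hw : w < v) (hz : z < u)
    (hgu : gF p m u = lam * m 0 + w * m n)
    (hvmn : v * m n = mu * m 0 + gF p m z)
    (q r q' r' : ℕ) (hqr : u = q * p + r) (hr : 1 ≤ r ∧ r ≤ p)
    (hq'r' : u - z = q' * p + r') (hr' : 1 ≤ r' ∧ r' ≤ p)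
    (h1 s1 l1 d1 : ℕ) (hs1 : 1 ≤ s1 ∧ s1 ≤ p) :
    ∃ h s l d : ℕ, h1 ≤ h ∧ 1 ≤ s ∧ s ≤ p ∧ l ≤ q ∧ d < v ∧
      h1 * m 0 + m s1 + l1 * m p + d1 * m n = h * m 0 + m s + l * m p + d * m n ∧
      (l ≤ q' ∨ d < v - w) := by
  obtain ⟨k, t, d, ht, htq, hdv, hor, heq⟩ :=
    exists_reduced_gF_add_mul (T := q * p + p) (T' := q' * p + p) hp harith hlam hz hw hgu hvmn
      (by omega) (by omega) (l1 * p + s1) d1 (by omega)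
  rw [gF_mul_add p m l1 s1 hs1.1 hs1.2, gF_of_pos p m t ht] at heq
  refine ⟨h1 + k, rF p t, qF p t, d, le_self_add, one_le_rF p t, rF_le p t hp,
    (qF_le_iff p t q hp ht).2 htq, hdv, by linear_combination heq, ?_⟩
  exact hor.imp_left (qF_le_iff p t q' hp ht).2

/-- Lemma 2: when `W ≠ ∅`, data with `l_1 > q'` and `d_1 ≥ υ−w` can be rewritten
with `l ≤ q`, `d < υ`, and moreover `l ≤ q'` or `d < υ−w`. -/
theorem stmt6
    (p n : ℕ) (hp : 1 ≤ p) (hn : n = p + 1)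
    (m : ℕ → ℕ) (c : ℕ) (hc : 1 ≤ c) (hm0 : 0 < m 0)
    (harith : ∀ i ≤ p, m i = m 0 + i * c) (hmn : 0 < m n)
    (hgcd : Finset.gcd (Finset.range (n + 1)) m = 1)
    (hminimal : ∀ j ≤ n, ¬ ∃ a : ℕ → ℕ, a j = 0 ∧
        m j = ∑ i ∈ Finset.range (n + 1), a i * m i)
    (S : Set ℕ)
    (hS : S = {γ | γ ∈ gammaGen n m ∧ ∀ δ ∈ gammaGen n m, δ + m 0 ≠ γ})
    (u : ℕ) (hu : IsLeast {t : ℕ | gF p m t ∉ S} u)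
    (v : ℕ) (hv : IsLeast {b : ℕ | 1 ≤ b ∧ b * m n ∈ gammaGen p m} v)
    (lam w mu z : ℕ) (hlam : 1 ≤ lam) (hw : w < v) (hz : z < u)
    (hgu : gF p m u = lam * m 0 + w * m n)
    (hvmn : v * m n = mu * m 0 + gF p m z)
    (q r q' r' : ℕ) (hqr : u = q * p + r) (hr : 1 ≤ r ∧ r ≤ p)
    (hq'r' : u - z = q' * p + r') (hr' : 1 ≤ r' ∧ r' ≤ p)
    (hz1 : 1 ≤ z) (hw1 : 1 ≤ w)
    (h1 s1 l1 d1 : ℕ) (hs1 : 1 ≤ s1 ∧ s1 ≤ p) (hl1 : q' < l1) (hd1 : v - w ≤ d1) :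
    ∃ h s l d : ℕ, h1 ≤ h ∧ 1 ≤ s ∧ s ≤ p ∧ l ≤ q ∧ d < v ∧
      h1 * m 0 + m s1 + l1 * m p + d1 * m n = h * m 0 + m s + l * m p + d * m n ∧
      (l ≤ q' ∨ d < v - w) :=
  stmt6_general p n hp m c harith u v lam w mu z hlam hw hz hgu hvmn q r q' r' hqr hr hq'r' hr' h1
    s1 l1 d1 hs1
end

section
/- Let m_0 ≥ 5 be an odd integer and let Γ = ℕ₀m_0 + ℕ₀(m_0+1) + ℕ₀(m_0−1). Then min{ t ≥ 1 : t·(m_0+1) − m_0 ∈ Γ } = (m_0+1)/2. -/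
/-- For odd `m_0 ≥ 5` and `Γ = ℕ₀m_0 + ℕ₀(m_0+1) + ℕ₀(m_0−1)`,
`min{ t ≥ 1 : t·(m_0+1) − m_0 ∈ Γ } = (m_0+1)/2`. -/
theorem stmt12 (m0 : ℕ) (hodd : Odd m0) (hm0 : 5 ≤ m0)
    (Γ : Set ℕ)
    (hΓ : Γ = {x | ∃ a b c : ℕ, x = a * m0 + b * (m0 + 1) + c * (m0 - 1)}) :
    IsLeast {t : ℕ | 1 ≤ t ∧ ∃ γ ∈ Γ, γ + m0 = t * (m0 + 1)} ((m0 + 1) / 2) := by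
  obtain ⟨k, hk⟩ := hodd
  subst hk hΓ
  have hk2 : 2 ≤ k := by omega
  have hdiv : (2 * k + 1 + 1) / 2 = k + 1 := by omega
  have hsub : 2 * k + 1 - 1 = 2 * k := by omega
  constructor
  · refine ⟨by omega, 1 * (2 * k + 1) + 0 * (2 * k + 1 + 1) + k * (2 * k + 1 - 1),
      ⟨1, 0, k, rfl⟩, ?_⟩
    rw [hdiv, hsub]; ring
  · rintro t ⟨ht1, γ, hγ, heq⟩
    obtain ⟨a, b, c, rfl⟩ := hγ
    rw [hdiv]
    by_contra hlt
    push_neg at hlt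
    rw [hsub] at heq
    have E : (a : ℤ) * (2 * k + 1) + b * (2 * k + 2) + c * (2 * k) + (2 * k + 1)
        = t * (2 * k + 2) := by exact_mod_cast heq
    set S : ℤ := (a : ℤ) + b + c + 1 with hS
    have key : ((t : ℤ) - S) * (2 * (k : ℤ) + 1) = (b : ℤ) - c - t := by
      rw [hS]; linear_combination -E
    have hT : (t : ℤ) ≤ k := by exact_mod_cast Nat.lt_succ_iff.mp hlt
    have ht1' : (1 : ℤ) ≤ t := by exact_mod_cast ht1
    have ha : (0 : ℤ) ≤ a := by positivity
    have hb : (0 : ℤ) ≤ b := by positivity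
    have hc : (0 : ℤ) ≤ c := by positivity
    have hk2' : (2 : ℤ) ≤ k := by exact_mod_cast hk2
    rcases lt_trichotomy S (t : ℤ) with h | h | h
    · have h1 : (1 : ℤ) ≤ (t : ℤ) - S := by linarith
      have h2 : (2 * (k : ℤ) + 1) ≤ ((t : ℤ) - S) * (2 * (k : ℤ) + 1) := by
        nlinarith
      have h3 : (b : ℤ) - c - t ≥ 2 * k + 1 := by linarith [key]
      simp only [hS] at h   -- S < t
      linarith
    · -- S = t : then b = c + t and a + 1 + 2c = 0
      rw [h] at key
      simp at key
      simp only [hS] at h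
      linarith
    · have h1 : (1 : ℤ) ≤ S - t := by linarith
      have h3 : (c : ℤ) + t - b = (S - t) * (2 * (k : ℤ) + 1) := by linarith [key]
      nlinarith [mul_nonneg (by linarith : (0:ℤ) ≤ S - t - 1) (by linarith : (0:ℤ) ≤ 2 * (k:ℤ))]
end

section
/- Let K be a field and let η : K[x_0, x_1, x_2] → K[t] be the K-algebra homomorphism defined by η(x_0) = t^7, η(x_1) = t^8, η(x_2) = t^6. Then the kernel of η equals the ideal of K[x_0, x_1, x_2] generated by the two binomials x_1·x_2 − x_0^2 and x_2^4 − x_1^3. -/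
/-!
Both binomials vanish at `(t^7, t^8, t^6)`. Modulo them, `x₀² ≡ x₁x₂` and `x₂⁴ ≡ x₁³`, so every
polynomial is congruent to one supported on the normal monomials `x₀^a x₁^b x₂^c` with `a ≤ 1`,
`c ≤ 3`. These go to `t^(7a + 8b + 6c)`, and the weights are pairwise distinct because `7a + 6c`
already runs through all residues mod 8; hence a normal polynomial in the kernel is zero.
-/

open MvPolynomial
open scoped Polynomial

section MonomialMap

variable {σ R : Type*} [CommSemiring R] (w : σ → ℕ)

theorem aeval_X_pow_monomial (m : σ →₀ ℕ) (a : R) :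
    aeval (fun i => (Polynomial.X : R[X]) ^ w i) (monomial m a) =
      Polynomial.monomial (Finsupp.weight w m) a := by
  rw [aeval_monomial, Polynomial.algebraMap_apply, Algebra.algebraMap_self, RingHom.id_apply,
    ← Polynomial.C_mul_X_pow_eq_monomial, Finsupp.weight_apply, Finsupp.sum, Finsupp.prod,
    Finset.prod_congr rfl fun i _ => (pow_mul _ _ _).symm, Finset.prod_pow_eq_pow_sum]
  simp only [smul_eq_mul, mul_comm]

theorem coeff_aeval_X_pow (p : MvPolynomial σ R) (n : ℕ) :
    (aeval (fun i => (Polynomial.X : R[X]) ^ w i) p).coeff n =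
      ∑ m ∈ p.support with Finsupp.weight w m = n, coeff m p := by
  conv_lhs => rw [p.as_sum]
  simp only [map_sum, aeval_X_pow_monomial, Polynomial.finsetSum_coeff, Polynomial.coeff_monomial,
    Finset.sum_filter]

theorem eq_zero_of_aeval_X_pow_eq_zero {p : MvPolynomial σ R}
    (hw : Set.InjOn (Finsupp.weight w) (p.support : Set (σ →₀ ℕ)))
    (hp : aeval (fun i => (Polynomial.X : R[X]) ^ w i) p = 0) : p = 0 := by
  ext d
  by_cases hd : d ∈ p.support
  · have hfiber : {m ∈ p.support | Finsupp.weight w m = Finsupp.weight w d} = {d} := by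
      ext m
      simp only [Finset.mem_filter, Finset.mem_singleton]
      exact ⟨fun h => hw h.1 hd h.2, by rintro rfl; exact ⟨hd, rfl⟩⟩
    simpa [coeff_aeval_X_pow, hfiber] using congrArg (Polynomial.coeff · (Finsupp.weight w d)) hp
  · simpa using hd

end MonomialMap

section CurveSevenEightSix

variable (R : Type*) [CommRing R]

def normalExponents : Set (Fin 3 →₀ ℕ) := {m | m 0 ≤ 1 ∧ m 2 ≤ 3}

noncomputable def curveParam : MvPolynomial (Fin 3) R →ₐ[R] R[X] :=
  aeval ![Polynomial.X ^ 7, Polynomial.X ^ 8, Polynomial.X ^ 6]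

noncomputable def curveIdeal : Ideal (MvPolynomial (Fin 3) R) :=
  Ideal.span {X 1 * X 2 - X 0 ^ 2, X 2 ^ 4 - X 1 ^ 3}

theorem weight_injOn_normalExponents : Set.InjOn (Finsupp.weight ![7, 8, 6]) normalExponents := by
  intro m hm d hd h
  simp only [Finsupp.weight_eq_sum, Fin.sum_univ_three, smul_eq_mul, Matrix.cons_val_zero,
    Matrix.cons_val_one, Matrix.cons_val] at h
  simp only [normalExponents, Set.mem_ofPred_eq] at hm hd
  ext i
  fin_cases i <;> simp <;> omega

variable {R}

theorem exists_normal_sub_monomial_mem (m : Fin 3 →₀ ℕ) (a : R) :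
    ∃ g ∈ restrictSupport R normalExponents, monomial m a - g ∈ curveIdeal R := by
  by_cases h0 : 2 ≤ m 0
  · obtain ⟨n, rfl⟩ := exists_add_of_le (Finsupp.single_le_iff.mpr h0)
    obtain ⟨g, hg, hmem⟩ :=
      exists_normal_sub_monomial_mem (Finsupp.single 1 1 + (Finsupp.single 2 1 + n)) a
    refine ⟨g, hg, ?_⟩
    have hstep : monomial (Finsupp.single 0 2 + n) a
        - monomial (Finsupp.single 1 1 + (Finsupp.single 2 1 + n)) a ∈ curveIdeal R := by
      rw [monomial_single_add, monomial_single_add, monomial_single_add, pow_one, pow_one,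
        show X 0 ^ 2 * monomial n a - X 1 * (X 2 * monomial n a) =
          -monomial n a * (X 1 * X 2 - X 0 ^ 2) by ring]
      exact Ideal.mul_mem_left _ _ (Ideal.subset_span (by simp))
    simpa using add_mem hstep hmem
  by_cases h2 : 4 ≤ m 2
  · obtain ⟨n, rfl⟩ := exists_add_of_le (Finsupp.single_le_iff.mpr h2)
    obtain ⟨g, hg, hmem⟩ := exists_normal_sub_monomial_mem (Finsupp.single 1 3 + n) a
    refine ⟨g, hg, ?_⟩
    have hstep : monomial (Finsupp.single 2 4 + n) a - monomial (Finsupp.single 1 3 + n) a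
        ∈ curveIdeal R := by
      rw [monomial_single_add, monomial_single_add, ← sub_mul, mul_comm]
      exact Ideal.mul_mem_left _ _ (Ideal.subset_span (by simp))
    simpa using add_mem hstep hmem
  exact ⟨monomial m a, (monomial_mem_restrictSupport R).mpr (.inl ⟨by omega, by omega⟩), by simp⟩
termination_by m 0 + m 2
decreasing_by all_goals subst_vars; simp <;> omega

theorem exists_normal_sub_mem (f : MvPolynomial (Fin 3) R) :
    ∃ g ∈ restrictSupport R normalExponents, f - g ∈ curveIdeal R := by
  induction f using MvPolynomial.induction_on' with
  | monomial m a => exact exists_normal_sub_monomial_mem m a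
  | add p q hp hq =>
    obtain ⟨g, hg, hpg⟩ := hp
    obtain ⟨h, hh, hqh⟩ := hq
    exact ⟨g + h, add_mem hg hh, by simpa [add_sub_add_comm] using add_mem hpg hqh⟩

theorem curveIdeal_le_ker_curveParam : curveIdeal R ≤ RingHom.ker (curveParam R) := by
  rw [curveIdeal, Ideal.span_le]
  rintro p (rfl | rfl) <;> simp [curveParam, ← pow_mul, ← pow_add]

theorem ker_curveParam : RingHom.ker (curveParam R) = curveIdeal R := by
  refine le_antisymm (fun f hf => ?_) curveIdeal_le_ker_curveParam
  obtain ⟨g, hg, hfg⟩ := exists_normal_sub_mem f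
  have hw : ![Polynomial.X ^ 7, Polynomial.X ^ 8, Polynomial.X ^ 6] =
      fun i => (Polynomial.X : R[X]) ^ (![7, 8, 6] : Fin 3 → ℕ) i := by
    ext i : 1; fin_cases i <;> rfl
  have hg0 : g = 0 := by
    refine eq_zero_of_aeval_X_pow_eq_zero _ (weight_injOn_normalExponents.mono hg) ?_
    rw [← hw, ← curveParam, ← RingHom.mem_ker]
    simpa using sub_mem hf (curveIdeal_le_ker_curveParam hfg)
  simpa [hg0] using hfg

end CurveSevenEightSix

/-- The kernel of `η : K[x_0,x_1,x_2] → K[t]`, `x_0 ↦ t^7`, `x_1 ↦ t^8`, `x_2 ↦ t^6`,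
is generated by `x_1x_2 − x_0^2` and `x_2^4 − x_1^3`. -/
theorem stmt15 {K : Type*} [Field K]
    (η : MvPolynomial (Fin 3) K →ₐ[K] Polynomial K)
    (hη : η = MvPolynomial.aeval ![Polynomial.X ^ 7, Polynomial.X ^ 8, Polynomial.X ^ 6]) :
    RingHom.ker η = Ideal.span
      {MvPolynomial.X 1 * MvPolynomial.X 2 - MvPolynomial.X 0 ^ 2,
       MvPolynomial.X 2 ^ 4 - MvPolynomial.X 1 ^ 3} := by
  subst hη
  exact ker_curveParam
end
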